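/- arXiv:2301.01708 — 3 statements merged into one kernel-verified Lean document; each statement's English description precedes it below -/
import Mathlib

section
/- Let n ≥ 4 and let a, b be integers with b ≥ a ≥ 0 and a + b = n − 4. Then the eccentricity matrix of the complement of the tree T_{n,3}^{a,b} has exactly the following eigenvalues: ±sqrt((4n+1 + sqrt((4n+1)^2 − 64(a+1)(b+1)))/2) and ±sqrt((4n+1 − sqrt((4n+1)^2 − 64(a+1)(b+1)))/2), each with multiplicity 1, and 0 with multiplicity n − 4. -/
noncomputable section

open SimpleGraph

/-- The eccentricity of a vertex: the maximum distance to the other vertices. -/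
def ecc {n : ℕ} (G : SimpleGraph (Fin n)) (v : Fin n) : ℕ :=
  Finset.univ.sup fun u => G.dist v u

/-- The eccentricity matrix of a graph on `Fin n`: the `(u,v)` entry is
`d(u,v)` if `u ≠ v` and `d(u,v) = min (ecc u) (ecc v)`, and `0` otherwise. -/
def eccMatrix {n : ℕ} (G : SimpleGraph (Fin n)) : Matrix (Fin n) (Fin n) ℝ :=
  fun u v =>
    if u ≠ v ∧ G.dist u v = min (ecc G u) (ecc G v) then (G.dist u v : ℝ) else 0

/-- The multiset of eigenvalues of the eccentricity matrix (the roots of its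
characteristic polynomial, with multiplicity). -/
def eccEigs {n : ℕ} (G : SimpleGraph (Fin n)) : Multiset ℝ :=
  ((eccMatrix G).charpoly).roots

/-- The eigenvalues of the eccentricity matrix, listed in non-increasing order. -/
def eccEigList {n : ℕ} (G : SimpleGraph (Fin n)) : List ℝ :=
  ((eccEigs G).sort (· ≤ ·)).reverse

/-- `xi G k` is the `k`-th largest eigenvalue of the eccentricity matrix of `G`
(1-indexed, so `xi G 1` is the `𝓔`-spectral radius and `xi G n` is the least
`𝓔`-eigenvalue). -/
def xi {n : ℕ} (G : SimpleGraph (Fin n)) (k : ℕ) : ℝ :=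
  (eccEigList G).getD (k - 1) 0

/-- The eccentricity energy of `G`: the sum of the absolute values of the
eigenvalues of the eccentricity matrix. -/
def eccEnergy {n : ℕ} (G : SimpleGraph (Fin n)) : ℝ :=
  ((eccEigs G).map fun x => |x|).sum

/-- The star `K_{1,n-1}` on `Fin n`, centered at `0`. -/
def starGraph (n : ℕ) : SimpleGraph (Fin n) :=
  SimpleGraph.fromRel fun u _ => u.val = 0

/-- The diameter of a graph on `Fin n`. -/
def gdiam {n : ℕ} (G : SimpleGraph (Fin n)) : ℕ :=
  Finset.univ.sup fun p : Fin n × Fin n => G.dist p.1 p.2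

/-- The tree `T_{n,d}^{a,b}` (with `b = n - d - 1 - a`): a path `v₀v₁⋯v_d` with
`a` pendant vertices attached to `v₁` and the remaining `n - d - 1 - a` pendant
vertices attached to `v_{d-1}`.  Vertices `0,…,d` form the path, vertices
`d+1,…,d+a` are the pendants at `v₁`, and vertices `d+a+1,…,n-1` are the
pendants at `v_{d-1}`. -/
def Tnd (n d a : ℕ) : SimpleGraph (Fin n) :=
  SimpleGraph.fromRel fun u v =>
    (u.val + 1 = v.val ∧ v.val ≤ d) ∨
    (u.val = 1 ∧ d < v.val ∧ v.val ≤ d + a) ∨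
    (u.val = d - 1 ∧ d + a < v.val)

/-!
Every vertex of `T = T_{n,3}^{a,b}` other than `v₁, v₂` is a leaf at `v₁` or at `v₂`, so folding
the leaves onto `v₀` and `v₃` maps `T` onto the path `P₄`, and `T` is the pull-back of `P₄`.
In `Tᶜ` the distance between two distinct vertices, and the eccentricity of a vertex, depend
only on their images in `P₄`; hence `𝓔(Tᶜ)` is the blow-up `K[f, f]` of a `4 × 4` matrix `K`.
Writing `K[f, f] = P (K Pᵀ)` with `P` the incidence matrix of the fibres of `f`, the identity
`χ(AB) = X^{n-4} χ(BA)` gives `χ(𝓔(Tᶜ)) = X^{n-4} χ(K D)`, where `D = diag(a+1, 1, 1, b+1)`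
records the fibre sizes. `K D` is tridiagonal with zero diagonal, so its characteristic
polynomial is the biquadratic `X⁴ - (4n+1) X² + 16 (a+1)(b+1)`.
-/

open Polynomial Matrix Finset

theorem Fin.card_filter_univ_val {n : ℕ} (p : ℕ → Prop) [DecidablePred p] :
    #{v : Fin n | p v} = #{m ∈ range n | p m} := by
  rw [← card_map Fin.valEmbedding, ← Nat.Iio_eq_range, ← map_valEmbedding_univ, filter_map]
  rfl

theorem Matrix.charpoly_submatrix_eq {ι κ R : Type*} [Fintype ι] [Fintype κ] [DecidableEq ι]
    [DecidableEq κ] [CommRing R] (K : Matrix κ κ R) (c : ι → κ)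
    (h : Fintype.card κ ≤ Fintype.card ι) :
    (K.submatrix c c).charpoly = X ^ (Fintype.card ι - Fintype.card κ) *
      (K * diagonal fun k => (#{u | c u = k} : R)).charpoly := by
  let P : Matrix ι κ R := of fun u k => if c u = k then 1 else 0
  have hsub : K.submatrix c c = P * (K * Pᵀ) := by
    ext u v
    simp [P, mul_apply]
  have hgram : Pᵀ * P = diagonal fun k => (#{u | c u = k} : R) := by
    ext k l
    by_cases hkl : k = l
    · subst hkl
      simp [P, mul_apply, ← ite_and, Finset.sum_boole]
    · refine (Finset.sum_eq_zero fun u _ => ?_).trans (diagonal_apply_ne _ hkl).symm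
      by_cases hu : c u = k <;> simp [P, hu, hkl]
  rw [hsub, charpoly_mul_comm_of_le _ _ h, Matrix.mul_assoc, hgram]

theorem Matrix.charpoly_tridiagonal_fin_four {R : Type*} [CommRing R] (p q r s t u : R) :
    (!![0, p, 0, 0; q, 0, r, 0; 0, s, 0, t; 0, 0, u, 0] : Matrix (Fin 4) (Fin 4) R).charpoly =
      X ^ 4 - C (p * q + r * s + t * u) * X ^ 2 + C (p * q * (t * u)) := by
  simp [charpoly, det_succ_row_zero, Fin.sum_univ_succ, charmatrix_apply, Fin.succAbove,
    submatrix]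
  ring

theorem Polynomial.roots_biquadratic {A B : ℝ} (hA : 0 ≤ A) (hB : 0 ≤ B) (hAB : 4 * B ≤ A ^ 2) :
    (X ^ 4 - C A * X ^ 2 + C B : ℝ[X]).roots =
      {√((A + √(A ^ 2 - 4 * B)) / 2), -√((A + √(A ^ 2 - 4 * B)) / 2),
        √((A - √(A ^ 2 - 4 * B)) / 2), -√((A - √(A ^ 2 - 4 * B)) / 2)} := by
  set δ := √(A ^ 2 - 4 * B)
  have hδ : δ ^ 2 = A ^ 2 - 4 * B := Real.sq_sqrt (by linarith)
  have hδA : δ ≤ A := Real.sqrt_le_iff.mpr ⟨hA, by linarith⟩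
  set s := √((A + δ) / 2)
  set t := √((A - δ) / 2)
  have hs : s ^ 2 = (A + δ) / 2 := Real.sq_sqrt (by linarith [Real.sqrt_nonneg (A ^ 2 - 4 * B)])
  have ht : t ^ 2 = (A - δ) / 2 := Real.sq_sqrt (by linarith)
  have hsum : A = s ^ 2 + t ^ 2 := by rw [hs, ht]; ring
  have hprod : B = s ^ 2 * t ^ 2 := by rw [hs, ht]; nlinarith
  rw [← roots_multiset_prod_X_sub_C ({s, -s, t, -t} : Multiset ℝ), hsum, hprod]
  congr 1
  simp only [Multiset.insert_eq_cons, Multiset.map_cons, Multiset.map_singleton,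
    Multiset.prod_cons, Multiset.prod_singleton, map_add, map_mul, map_pow, map_neg]
  ring

section Metric

variable {V : Type*} {G : SimpleGraph V} {u v w x y : V}

theorem SimpleGraph.dist_eq_two_of_adj_of_adj (hne : u ≠ v) (hnadj : ¬G.Adj u v)
    (huw : G.Adj u w) (hwv : G.Adj w v) : G.dist u v = 2 := by
  have h : G.edist u v = 2 := edist_eq_two_iff.mpr ⟨hne, hnadj, w, huw, hwv.symm⟩
  exact_mod_cast (huw.reachable.trans hwv.reachable).coe_dist_eq_edist.trans h

theorem SimpleGraph.dist_eq_three_of_adj_of_adj_of_adj (hne : u ≠ v) (hnadj : ¬G.Adj u v)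
    (hcommon : ∀ w, G.Adj u w → ¬G.Adj w v) (hux : G.Adj u x) (hxy : G.Adj x y)
    (hyv : G.Adj y v) : G.dist u v = 3 := by
  have hlt : 2 < G.edist u v := two_lt_edist_iff.mpr ⟨hne, hnadj,
    Set.eq_empty_of_forall_notMem fun w hw => hcommon w hw.1 hw.2.symm⟩
  rw [← (hux.reachable.trans (hxy.reachable.trans hyv.reachable)).coe_dist_eq_edist] at hlt
  have hle := G.dist_le (.cons hux (.cons hxy (.cons hyv .nil)))
  simp only [Walk.length_cons, Walk.length_nil] at hle
  norm_cast at hlt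
  omega

end Metric

namespace Tnd3

def fold (a m : ℕ) : Fin 4 :=
  if m = 1 then 1 else if m = 2 then 2 else if m = 3 ∨ a + 3 < m then 3 else 0

/-- Distances in `Tᶜ` between distinct vertices of the given fibres; two leaves on the same side
are adjacent in `Tᶜ`, hence the `1`s on the diagonal. -/
def quotDist : Fin 4 → Fin 4 → ℕ := ![![1, 2, 1, 1], ![2, 1, 3, 1], ![1, 3, 1, 2], ![1, 1, 2, 1]]

def quotEcc : Fin 4 → ℕ := ![2, 3, 3, 2]

def quotEccMatrix : Matrix (Fin 4) (Fin 4) ℝ := !![0, 2, 0, 0; 2, 0, 3, 0; 0, 3, 0, 2; 0, 0, 2, 0]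

variable {n a : ℕ}

theorem fold_val (k : Fin 4) : fold a k = k := by
  fin_cases k <;> simp [fold]

theorem eq_comap_fold : Tnd n 3 a = (pathGraph 4).comap (fold a ∘ Fin.val) := by
  ext u v
  simp only [Tnd, fromRel_adj, comap_adj, pathGraph_adj, Function.comp_apply, fold, ne_eq,
    Fin.ext_iff]
  split_ifs <;> simp <;> omega

theorem compl_adj_iff {u v : Fin n} :
    (Tnd n 3 a)ᶜ.Adj u v ↔ u ≠ v ∧ ¬(pathGraph 4).Adj (fold a u) (fold a v) := by
  rw [eq_comap_fold, compl_adj, comap_adj, Function.comp_apply, Function.comp_apply]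

theorem compl_adj_of_fold {u v : Fin n} (hne : fold a u ≠ fold a v)
    (hP : ¬(pathGraph 4).Adj (fold a u) (fold a v)) : (Tnd n 3 a)ᶜ.Adj u v :=
  compl_adj_iff.mpr ⟨fun h => hne (h ▸ rfl), hP⟩

theorem quotDist_of_not_adj : ∀ i j : Fin 4, ¬(pathGraph 4).Adj i j → quotDist i j = 1 := by
  simp only [pathGraph_adj]; decide

-- Witnesses: for an outer edge of `P₄`, a fibre `P₄ᶜ`-adjacent to both of its ends; for the
-- middle edge, a path of length 3 in `P₄ᶜ`, while no fibre is `P₄ᶜ`-adjacent to both `1` and `2`.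
theorem quotDist_of_adj : ∀ i j : Fin 4, (pathGraph 4).Adj i j →
    (quotDist i j = 2 ∧ ∃ k, k ≠ i ∧ k ≠ j ∧ ¬(pathGraph 4).Adj i k ∧ ¬(pathGraph 4).Adj k j) ∨
    (quotDist i j = 3 ∧ (∀ m, (pathGraph 4).Adj i m ∨ (pathGraph 4).Adj m j) ∧
      ∃ k l, k ≠ i ∧ ¬(pathGraph 4).Adj i k ∧ k ≠ l ∧ ¬(pathGraph 4).Adj k l ∧
        l ≠ j ∧ ¬(pathGraph 4).Adj l j) := by
  simp only [pathGraph_adj]; decide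

theorem dist_compl (hn : 4 ≤ n) {u v : Fin n} (huv : u ≠ v) :
    (Tnd n 3 a)ᶜ.dist u v = quotDist (fold a u) (fold a v) := by
  have hrep (k : Fin 4) : fold a (Fin.castLE hn k) = k := fold_val k
  by_cases hP : (pathGraph 4).Adj (fold a u) (fold a v)
  · have hnadj : ¬(Tnd n 3 a)ᶜ.Adj u v := fun h => (compl_adj_iff.mp h).2 hP
    rcases quotDist_of_adj _ _ hP with
      ⟨h2, k, hki, hkj, hik, hkj'⟩ | ⟨h3, hcover, k, l, hki, hik, hkl, hkl', hlj, hlj'⟩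
    · rw [h2]
      exact dist_eq_two_of_adj_of_adj huv hnadj (w := Fin.castLE hn k)
        (compl_adj_of_fold (by rw [hrep]; exact hki.symm) (by rwa [hrep]))
        (compl_adj_of_fold (by rwa [hrep]) (by rwa [hrep]))
    · rw [h3]
      refine dist_eq_three_of_adj_of_adj_of_adj huv hnadj (fun w huw hwv => ?_)
        (x := Fin.castLE hn k) (y := Fin.castLE hn l)
        (compl_adj_of_fold (by rw [hrep]; exact hki.symm) (by rwa [hrep]))
        (compl_adj_of_fold (by rwa [hrep, hrep]) (by rwa [hrep, hrep]))
        (compl_adj_of_fold (by rwa [hrep]) (by rwa [hrep]))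
      exact (hcover (fold a w)).elim (compl_adj_iff.mp huw).2 (compl_adj_iff.mp hwv).2
  · rw [quotDist_of_not_adj _ _ hP, dist_eq_one_iff_adj]
    exact compl_adj_iff.mpr ⟨huv, hP⟩

theorem quotDist_le_quotEcc : ∀ i j : Fin 4, quotDist i j ≤ quotEcc i := by decide

theorem exists_quotDist_eq_quotEcc : ∀ i : Fin 4, ∃ j, j ≠ i ∧ quotDist i j = quotEcc i := by
  decide

theorem ecc_compl (hn : 4 ≤ n) (v : Fin n) : ecc (Tnd n 3 a)ᶜ v = quotEcc (fold a v) := by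
  refine le_antisymm (Finset.sup_le fun u _ => ?_) ?_
  · by_cases hvu : v = u
    · simp [hvu]
    · exact (dist_compl hn hvu).trans_le (quotDist_le_quotEcc _ _)
  · obtain ⟨k, hk, hdist⟩ := exists_quotDist_eq_quotEcc (fold a v)
    have hvk : v ≠ Fin.castLE hn k := fun h => hk (by rw [h]; exact (fold_val k).symm)
    calc quotEcc (fold a v) = (Tnd n 3 a)ᶜ.dist v (Fin.castLE hn k) := by
          rw [dist_compl hn hvk, Fin.val_castLE, fold_val, hdist]
      _ ≤ ecc (Tnd n 3 a)ᶜ v := Finset.le_sup (f := fun u => (Tnd n 3 a)ᶜ.dist v u) (mem_univ _)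

theorem quotEccMatrix_eq (i j : Fin 4) :
    quotEccMatrix i j =
      if quotDist i j = min (quotEcc i) (quotEcc j) then (quotDist i j : ℝ) else 0 := by
  fin_cases i <;> fin_cases j <;> norm_num [quotEccMatrix, quotDist, quotEcc]

theorem eccMatrix_compl (hn : 4 ≤ n) :
    eccMatrix (Tnd n 3 a)ᶜ = quotEccMatrix.submatrix (fold a ∘ Fin.val) (fold a ∘ Fin.val) := by
  ext u v
  by_cases huv : u = v
  · subst huv
    simp only [eccMatrix, submatrix_apply, Function.comp_apply, ne_eq, not_true_eq_false,
      false_and, if_false]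
    generalize fold a u = i
    fin_cases i <;> rfl
  · simp only [eccMatrix, submatrix_apply, Function.comp_apply, quotEccMatrix_eq,
      dist_compl hn huv, ecc_compl hn, ne_eq, huv, not_false_eq_true, true_and]

theorem card_fold_eq {b : ℕ} (hN : n = a + b + 4) (k : Fin 4) :
    #{v : Fin n | fold a v = k} = ![a + 1, 1, 1, b + 1] k := by
  rw [Fin.card_filter_univ_val fun m => fold a m = k]
  have hfiber (i : Fin 4) (s : Finset ℕ) (hs : ∀ m, m ∈ s ↔ m < n ∧ fold a m = i) :
      #{m ∈ range n | fold a m = i} = #s := by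
    congr 1; ext m; simp [hs]
  fin_cases k <;> dsimp only [Fin.reduceFinMk, Fin.zero_eta, Fin.mk_one]
  · rw [hfiber 0 (insert 0 (Icc 4 (a + 3))) fun m => by unfold fold; split_ifs <;> simp <;> omega]
    simp
  · rw [hfiber 1 {1} fun m => by unfold fold; split_ifs <;> simp <;> omega]
    simp
  · rw [hfiber 2 {2} fun m => by unfold fold; split_ifs <;> simp <;> omega]
    simp
  · rw [hfiber 3 (insert 3 (Ico (a + 4) n)) fun m => by unfold fold; split_ifs <;> simp <;> omega]
    simp; omega

theorem charpoly_eccMatrix_compl {b : ℕ} (hN : n = a + b + 4) :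
    (eccMatrix (Tnd n 3 a)ᶜ).charpoly = X ^ (n - 4) *
      (X ^ 4 - C (4 * (n : ℝ) + 1) * X ^ 2 + C (16 * ((a : ℝ) + 1) * ((b : ℝ) + 1))) := by
  have hquot : quotEccMatrix * diagonal (fun k => (#{v : Fin n | (fold a ∘ Fin.val) v = k} : ℝ)) =
      !![0, 2, 0, 0; 2 * ((a : ℝ) + 1), 0, 3, 0; 0, 3, 0, 2 * ((b : ℝ) + 1); 0, 0, 2, 0] := by
    ext i j
    simp only [mul_diagonal, Function.comp_apply, card_fold_eq hN]
    fin_cases i <;> fin_cases j <;> simp [quotEccMatrix]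
  rw [eccMatrix_compl (by omega), charpoly_submatrix_eq _ _ (by simp; omega), Fintype.card_fin,
    Fintype.card_fin, hquot, charpoly_tridiagonal_fin_four]
  subst hN
  push_cast
  ring_nf

end Tnd3

theorem stmt_0_general {n : ℕ} (hn : 4 ≤ n) (a b : ℕ) (hsum : a + b = n - 4) :
    eccEigs ((Tnd n 3 a)ᶜ) =
      ({Real.sqrt ((4 * (n : ℝ) + 1 +
            Real.sqrt ((4 * (n : ℝ) + 1) ^ 2 - 64 * ((a : ℝ) + 1) * ((b : ℝ) + 1))) / 2),
        -Real.sqrt ((4 * (n : ℝ) + 1 +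
            Real.sqrt ((4 * (n : ℝ) + 1) ^ 2 - 64 * ((a : ℝ) + 1) * ((b : ℝ) + 1))) / 2),
        Real.sqrt ((4 * (n : ℝ) + 1 -
            Real.sqrt ((4 * (n : ℝ) + 1) ^ 2 - 64 * ((a : ℝ) + 1) * ((b : ℝ) + 1))) / 2),
        -Real.sqrt ((4 * (n : ℝ) + 1 -
            Real.sqrt ((4 * (n : ℝ) + 1) ^ 2 - 64 * ((a : ℝ) + 1) * ((b : ℝ) + 1))) / 2)} :
          Multiset ℝ) +
      Multiset.replicate (n - 4) 0 := by
  have hN : n = a + b + 4 := by omega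
  have hcharpoly := Tnd3.charpoly_eccMatrix_compl hN
  have hne : (eccMatrix (Tnd n 3 a)ᶜ).charpoly ≠ 0 := (charpoly_monic _).ne_zero
  rw [hcharpoly] at hne
  have hdisc : 4 * (16 * ((a : ℝ) + 1) * ((b : ℝ) + 1)) ≤ (4 * (n : ℝ) + 1) ^ 2 := by
    rw [show (n : ℝ) = a + b + 4 by exact_mod_cast hN]
    nlinarith [sq_nonneg ((a : ℝ) - b), a.cast_nonneg (α := ℝ), b.cast_nonneg (α := ℝ)]
  rw [eccEigs, hcharpoly, roots_mul hne, roots_X_pow,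
    show 64 * ((a : ℝ) + 1) * ((b : ℝ) + 1) = 4 * (16 * ((a : ℝ) + 1) * ((b : ℝ) + 1)) by ring,
    roots_biquadratic (by positivity) (by positivity) hdisc, Multiset.nsmul_singleton, add_comm]

/-- Lemma 2.2: the `𝓔`-spectrum of `(T_{n,3}^{a,b})ᶜ`. -/
theorem stmt_0 {n : ℕ} (hn : 4 ≤ n) (a b : ℕ) (hab : a ≤ b) (hsum : a + b = n - 4) :
    eccEigs ((Tnd n 3 a)ᶜ) =
      ({Real.sqrt ((4 * (n : ℝ) + 1 +
            Real.sqrt ((4 * (n : ℝ) + 1) ^ 2 - 64 * ((a : ℝ) + 1) * ((b : ℝ) + 1))) / 2),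
        -Real.sqrt ((4 * (n : ℝ) + 1 +
            Real.sqrt ((4 * (n : ℝ) + 1) ^ 2 - 64 * ((a : ℝ) + 1) * ((b : ℝ) + 1))) / 2),
        Real.sqrt ((4 * (n : ℝ) + 1 -
            Real.sqrt ((4 * (n : ℝ) + 1) ^ 2 - 64 * ((a : ℝ) + 1) * ((b : ℝ) + 1))) / 2),
        -Real.sqrt ((4 * (n : ℝ) + 1 -
            Real.sqrt ((4 * (n : ℝ) + 1) ^ 2 - 64 * ((a : ℝ) + 1) * ((b : ℝ) + 1))) / 2)} :
          Multiset ℝ) +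
      Multiset.replicate (n - 4) 0 :=
  stmt_0_general hn a b hsum
end
end

section
/- Let T be a tree on n ≥ 4 vertices that is not a star. Then the eigenvalues of the eccentricity matrix 𝓔(T^c) are symmetric about the origin: if λ is an eigenvalue of 𝓔(T^c) with multiplicity k, then −λ is also an eigenvalue of 𝓔(T^c) with multiplicity k. -/
noncomputable section

open SimpleGraph

/-! A nonzero off-diagonal entry of `𝓔(Tᶜ)` sits at a pair `u, v` with `d(u, v) = min (e u) (e v)`.
Since `T` is not a star, no vertex of `T` is adjacent to all others; then the ends of every edge
`uv` of `T` are joined in `Tᶜ` by a path `u x v` or `u x y v`, so every eccentricity in `Tᶜ` is at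
least `2` and `𝓔(Tᶜ)` is supported on the edges of `T`. A tree is bipartite, and conjugating by the
`±1` diagonal matrix of a 2-colouring negates every matrix supported on its edges, so `𝓔(Tᶜ)` and
`-𝓔(Tᶜ)` have the same characteristic polynomial. -/

open Polynomial

namespace Matrix

variable {n R : Type*} [Fintype n] [DecidableEq n] [CommRing R]

theorem charpoly_neg (M : Matrix n n R) :
    (-M).charpoly = (-1) ^ Fintype.card n * M.charpoly.comp (-X) := by
  have hmap : (charmatrix M).map (compRingHom (-X)) = -charmatrix (-M) := by
    ext i j : 1
    by_cases h : i = j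
    · subst h
      simp only [map_apply, charmatrix_apply_eq, neg_apply, coe_compRingHom, sub_comp, X_comp,
        C_comp, map_neg]
      ring
    · simp [h]
  have hdet := RingHom.map_det (compRingHom (-X : R[X])) (charmatrix M)
  rw [RingHom.mapMatrix_apply, hmap, det_neg] at hdet
  rw [charpoly, charpoly, ← coe_compRingHom_apply, hdet, ← mul_assoc, ← pow_add,
    ← two_mul, pow_mul, neg_one_sq, one_pow, one_mul]

theorem roots_charpoly_neg [IsDomain R] (M : Matrix n n R) :
    (-M).charpoly.roots = M.charpoly.roots.map Neg.neg := by
  have hC : ((-1) ^ Fintype.card n : R[X]) = C ((-1) ^ Fintype.card n) := by simp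
  rw [charpoly_neg, hC, roots_C_mul _ (pow_ne_zero _ (neg_ne_zero.mpr one_ne_zero)),
    roots_comp_neg_X]

theorem charpoly_neg_of_diagonal_conj (M : Matrix n n R) (s : n → R) (hs : ∀ i, s i * s i = 1)
    (hM : ∀ i j, s i * M i j * s j = -M i j) : (-M).charpoly = M.charpoly := by
  have hss : diagonal s * diagonal s = 1 := by
    rw [diagonal_mul_diagonal, ← diagonal_one]; exact congrArg diagonal (funext hs)
  have hconj : -M = diagonal s * M * diagonal s := by
    ext i j
    simp [mul_diagonal, diagonal_mul, hM]
  rw [hconj, mul_assoc, charpoly_mul_comm, mul_assoc, hss, mul_one]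

theorem roots_charpoly_map_neg_of_isBipartite [IsDomain R] {G : SimpleGraph n}
    (hG : G.IsBipartite) (M : Matrix n n R) (hM : ∀ u v, M u v ≠ 0 → G.Adj u v) :
    M.charpoly.roots.map Neg.neg = M.charpoly.roots := by
  obtain ⟨c⟩ := hG
  let s : n → R := fun v => if c v = 0 then 1 else -1
  have hs : ∀ v, s v * s v = 1 := fun v => by by_cases h : c v = 0 <;> simp [s, h]
  have hsM : ∀ u v, s u * M u v * s v = -M u v := by
    intro u v
    by_cases h0 : M u v = 0
    · simp [h0]
    have hc : c u ≠ c v := c.valid (hM u v h0)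
    have hsuv : s u * s v = -1 := by
      simp only [s]; split_ifs <;> simp_all [Fin.eq_one_of_ne_zero]
    linear_combination M u v * hsuv
  rw [← roots_charpoly_neg, M.charpoly_neg_of_diagonal_conj s hs hsM]

end Matrix

namespace SimpleGraph

variable {V : Type*} {T : SimpleGraph V}

theorem IsAcyclic.eq_of_adj_of_adj (hT : T.IsAcyclic) {u v w x : V} (huv : T.Adj u v)
    (hvw : T.Adj v w) (hux : T.Adj u x) (hxw : T.Adj x w) (huw : u ≠ w) : v = x := by
  have hpath : ∀ y (huy : T.Adj u y) (hyw : T.Adj y w),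
      (Walk.cons huy (Walk.cons hyw .nil)).IsPath := fun y huy hyw => by
    simp [Walk.cons_isPath_iff, huy.ne, hyw.ne, huw]
  have := (hT.subsingleton_path u w).elim ⟨_, hpath v huv hvw⟩ ⟨_, hpath x hux hxw⟩
  simpa using congrArg (fun p : T.Path u w => p.1.snd) this

theorem IsAcyclic.reachable_compl_of_adj (hT : T.IsAcyclic) (hT' : ∀ c, ∃ x ≠ c, ¬T.Adj c x)
    {u v : V} (h : T.Adj u v) : Tᶜ.Reachable u v := by
  have hstep : ∀ {a b}, a ≠ b → ¬T.Adj a b → Tᶜ.Reachable a b :=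
    fun hab hnab => (show Tᶜ.Adj _ _ from ⟨hab, hnab⟩).reachable
  obtain ⟨x, hxu, hux⟩ := hT' u
  obtain ⟨y, hyv, hvy⟩ := hT' v
  have hxv : x ≠ v := by rintro rfl; exact hux h
  have hyu : y ≠ u := by rintro rfl; exact hvy h.symm
  by_cases hvx : T.Adj v x
  swap
  · exact (hstep hxu.symm hux).trans (hstep hxv (fun h' => hvx h'.symm))
  by_cases huy : T.Adj u y
  swap
  · exact (hstep hyu.symm huy).trans (hstep hyv (fun h' => hvy h'.symm))
  have hxy : x ≠ y := by rintro rfl; exact hux huy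
  have hnxy : ¬T.Adj x y := fun hxy' =>
    hyv (hT.eq_of_adj_of_adj huy hxy'.symm h hvx hxu.symm)
  exact ((hstep hxu.symm hux).trans (hstep hxy hnxy)).trans (hstep hyv (fun h' => hvy h'.symm))

end SimpleGraph

theorem nonempty_iso_starGraph {n : ℕ} {G : SimpleGraph (Fin n)} (c : Fin n)
    (hG : ∀ a b, G.Adj a b ↔ a ≠ b ∧ (a = c ∨ b = c)) :
    Nonempty (G ≃g _root_.starGraph n) := by
  let z : Fin n := ⟨0, c.pos⟩
  have hz : ∀ a, (Equiv.swap c z a).val = 0 ↔ a = c := fun a => by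
    rw [show (0 : ℕ) = z.val from rfl, Fin.val_inj, Equiv.swap_apply_eq_iff,
      Equiv.swap_apply_right]
  refine ⟨⟨Equiv.swap c z, fun {a b} => ?_⟩⟩
  simp only [_root_.starGraph, fromRel_adj, hz, hG, ne_eq, EmbeddingLike.apply_eq_iff_eq]

theorem SimpleGraph.IsAcyclic.exists_not_adj_of_not_nonempty_iso_starGraph {n : ℕ}
    {T : SimpleGraph (Fin n)} (hT : T.IsAcyclic) (hstar : ¬ Nonempty (T ≃g _root_.starGraph n))
    (c : Fin n) : ∃ x ≠ c, ¬T.Adj c x := by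
  by_contra! hc
  refine hstar (nonempty_iso_starGraph c fun a b => ⟨fun hab => ⟨hab.ne, ?_⟩, ?_⟩)
  · by_contra! habc
    exact hT.cliqueFree le_rfl {c, a, b}
      (is3Clique_triple_iff.mpr ⟨hc a habc.1, hc b habc.2, hab⟩)
  · rintro ⟨hab, rfl | rfl⟩
    exacts [hc b hab.symm, (hc a hab).symm]

theorem SimpleGraph.IsTree.two_le_ecc_compl {n : ℕ} {T : SimpleGraph (Fin n)} (hT : T.IsTree)
    (hT' : ∀ c, ∃ x ≠ c, ¬T.Adj c x) (u : Fin n) : 2 ≤ ecc Tᶜ u := by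
  obtain ⟨x, hxu, -⟩ := hT' u
  have : Nontrivial (Fin n) := nontrivial_of_ne x u hxu
  obtain ⟨w, huw⟩ := hT.connected.preconnected.exists_adj_of_nontrivial u
  have hpos : 0 < Tᶜ.dist u w :=
    (hT.isAcyclic.reachable_compl_of_adj hT' huw).pos_dist_of_ne huw.ne
  have hne_one : Tᶜ.dist u w ≠ 1 := fun h => (dist_eq_one_iff_adj.mp h).2 huw
  have hle : Tᶜ.dist u w ≤ ecc Tᶜ u := Finset.le_sup (Finset.mem_univ w)
  omega

theorem eccMatrix_eq_zero_of_adj {n : ℕ} {G : SimpleGraph (Fin n)} {u v : Fin n}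
    (hu : 2 ≤ ecc G u) (hv : 2 ≤ ecc G v) (h : G.Adj u v) : eccMatrix G u v = 0 := by
  have hd : G.dist u v = 1 := dist_eq_one_iff_adj.mpr h
  rw [eccMatrix, if_neg]
  omega

theorem adj_of_eccMatrix_compl_ne_zero {n : ℕ} {G : SimpleGraph (Fin n)}
    (hG : ∀ u, 2 ≤ ecc Gᶜ u) {u v : Fin n} (h : eccMatrix Gᶜ u v ≠ 0) : G.Adj u v := by
  by_contra hnadj
  have huv : u ≠ v := by rintro rfl; simp [eccMatrix] at h
  exact h (eccMatrix_eq_zero_of_adj (hG u) (hG v) ⟨huv, hnadj⟩)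

theorem stmt_5_general {n : ℕ} (T : SimpleGraph (Fin n)) (hT : T.IsTree)
    (hstar : ¬ Nonempty (T ≃g _root_.starGraph n)) (lam : ℝ) :
    Multiset.count lam (eccEigs Tᶜ) = Multiset.count (-lam) (eccEigs Tᶜ) := by
  have hT' := hT.isAcyclic.exists_not_adj_of_not_nonempty_iso_starGraph hstar
  have hsymm : (eccEigs Tᶜ).map Neg.neg = eccEigs Tᶜ :=
    Matrix.roots_charpoly_map_neg_of_isBipartite hT.isBipartite _
      fun _ _ => adj_of_eccMatrix_compl_ne_zero (hT.two_le_ecc_compl hT')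
  conv_rhs => rw [← hsymm]
  exact (Multiset.count_map_eq_count' _ _ neg_injective lam).symm

/-- Theorem 3.6: the eigenvalues of the eccentricity matrix of the complement of
a tree are symmetric about the origin (with multiplicities). -/
theorem stmt_5 {n : ℕ} (hn : 4 ≤ n) (T : SimpleGraph (Fin n)) (hT : T.IsTree)
    (hstar : ¬ Nonempty (T ≃g _root_.starGraph n)) (lam : ℝ) :
    Multiset.count lam (eccEigs Tᶜ) = Multiset.count (-lam) (eccEigs Tᶜ) :=
  stmt_5_general T hT hstar lam
end
end

section
/- For n ≥ 5, the 𝓔-energy of the complement of the tree T_{n,4}^{0,n−5} equals 2·sqrt(4(n−1)+8·sqrt(2n−7)). Moreover, the eccentricity matrix of (T_{n,4}^{0,n−5})^c has eigenvalues ±sqrt(2n−2+2·sqrt(n^2−10n+29)) and ±sqrt(2n−2−2·sqrt(n^2−10n+29)), each with multiplicity 1, and 0 with multiplicity n−4. -/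
noncomputable section

open SimpleGraph

/-!
In the complement of `T = T_{n,4}^{0,n-5}` two vertices are at distance `1` unless they are
adjacent in `T`, and then at distance `2`, because every edge of `T` has a vertex adjacent to
neither of its ends. Hence every eccentricity is `2` and `𝓔(Tᶜ) = 2 A(T)`. Listing the vertices
as the path `v₀v₁v₂v₃` followed by the `n - 4` pendant vertices of `v₃` (`v₄` among them), the
block of the pendants in `tI - 2A(T)` is scalar, and its Schur complement gives
`det (tI - 2A(T)) = t^(n-4) (t⁴ - 4(n-1) t² + 16(2n-7))` for `t ≠ 0`, hence as polynomials.
The roots are `0` and `±√a, ±√b` with `a, b = 2n - 2 ± 2√(n² - 10n + 29)`, and the energy is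
`2(√a + √b) = 2√(a + b + 2√(ab))`.
-/

open Matrix Polynomial

section ComplementDistances

variable {V : Type*} {G : SimpleGraph V} {u v : V}

theorem dist_compl_eq_one (huv : u ≠ v) (h : ¬G.Adj u v) : Gᶜ.dist u v = 1 :=
  dist_eq_one_iff_adj.mpr ⟨huv, h⟩

theorem dist_compl_eq_two (h : G.Adj u v) (hw : (Gᶜ.commonNeighbors u v).Nonempty) :
    Gᶜ.dist u v = 2 := by
  rw [SimpleGraph.dist, ENat.toNat_eq_iff two_ne_zero]
  exact edist_eq_two_iff.mpr ⟨G.ne_of_adj h, fun hc => hc.2 h, hw⟩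

end ComplementDistances

section ComplementEccentricity

variable {n : ℕ} {G : SimpleGraph (Fin n)}

theorem ecc_compl_eq_two (hedge : ∀ u v, G.Adj u v → (Gᶜ.commonNeighbors u v).Nonempty)
    (hnbr : ∀ v, ∃ u, G.Adj v u) (v : Fin n) : ecc Gᶜ v = 2 := by
  obtain ⟨w, hvw⟩ := hnbr v
  refine le_antisymm (Finset.sup_le fun u _ => ?_) ?_
  · by_cases huv : v = u
    · simp [huv]
    by_cases hadj : G.Adj v u
    · rw [dist_compl_eq_two hadj (hedge v u hadj)]
    · rw [dist_compl_eq_one huv hadj]; omega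
  · rw [← dist_compl_eq_two hvw (hedge v w hvw)]
    exact Finset.le_sup (f := fun u => Gᶜ.dist v u) (Finset.mem_univ w)

theorem eccMatrix_compl_eq_two_smul_adjMatrix [DecidableRel G.Adj]
    (hedge : ∀ u v, G.Adj u v → (Gᶜ.commonNeighbors u v).Nonempty)
    (hnbr : ∀ v, ∃ u, G.Adj v u) : eccMatrix Gᶜ = (2 : ℝ) • G.adjMatrix ℝ := by
  ext u v
  simp only [eccMatrix, ecc_compl_eq_two hedge hnbr, min_self]
  by_cases huv : u = v
  · simp [huv]
  by_cases hadj : G.Adj u v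
  · simp [huv, hadj, dist_compl_eq_two hadj (hedge u v hadj)]
  · simp [huv, hadj, dist_compl_eq_one huv hadj]

end ComplementEccentricity

theorem det_fromBlocks_smul_one₂₂ {l m K : Type*} [Fintype l] [Fintype m] [DecidableEq l]
    [DecidableEq m] [Field K] (A : Matrix l l K) (B : Matrix l m K) (C : Matrix m l K) {t : K}
    (ht : t ≠ 0) :
    (fromBlocks A B C (t • 1)).det = t ^ Fintype.card m * (A - t⁻¹ • (B * C)).det := by
  have hfactor : fromBlocks A B C (t • 1) =
      fromBlocks 1 0 0 (t • 1) * fromBlocks A B (t⁻¹ • C) 1 := by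
    simp [fromBlocks_multiply, smul_smul, ht]
  rw [hfactor, det_mul, det_fromBlocks_zero₂₁, det_fromBlocks_one₂₂, det_smul, det_one,
    det_one, Matrix.mul_smul]
  ring

theorem X_pow_four_sub_C_add_mul_X_sq_add_C_mul (a b : ℝ) :
    (X ^ 4 - C (a + b) * X ^ 2 + C (a * b) : ℝ[X]) = (X ^ 2 - C a) * (X ^ 2 - C b) := by
  rw [C_add, C_mul]
  ring

theorem roots_X_sq_sub_C {a : ℝ} (ha : 0 ≤ a) : (X ^ 2 - C a).roots = {√a, -√a} := by
  have hfactor : X ^ 2 - C a = (X - C √a) * (X - C (-√a)) := by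
    have hC : C a = C √a ^ 2 := by rw [← C_pow, Real.sq_sqrt ha]
    rw [hC, map_neg, sub_neg_eq_add]
    ring
  rw [hfactor, roots_mul (mul_ne_zero (X_sub_C_ne_zero _) (X_sub_C_ne_zero _)), roots_X_sub_C,
    roots_X_sub_C]
  rfl

theorem roots_X_pow_mul_X_sq_sub_C_mul_X_sq_sub_C {a b : ℝ} (ha : 0 ≤ a) (hb : 0 ≤ b)
    (k : ℕ) :
    (X ^ k * ((X ^ 2 - C a) * (X ^ 2 - C b))).roots =
      ({√a, -√a, √b, -√b} : Multiset ℝ) + Multiset.replicate k 0 := by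
  have hne : ∀ c : ℝ, X ^ 2 - C c ≠ 0 := fun c => (monic_X_pow_sub_C c two_ne_zero).ne_zero
  rw [roots_mul (mul_ne_zero (pow_ne_zero _ X_ne_zero) (mul_ne_zero (hne a) (hne b))),
    roots_mul (mul_ne_zero (hne a) (hne b)), roots_pow, roots_X, roots_X_sq_sub_C ha,
    roots_X_sq_sub_C hb, Multiset.nsmul_singleton, add_comm]
  rfl

theorem sum_map_abs_sqrt_neg_sqrt_add_replicate_zero {a b : ℝ} (ha : 0 ≤ a) (hb : 0 ≤ b)
    (k : ℕ) :
    ((({√a, -√a, √b, -√b} : Multiset ℝ) + Multiset.replicate k 0).map (|·|)).sum =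
      2 * √(a + b + 2 * √(a * b)) := by
  have hsq : (√a + √b) ^ 2 = a + b + 2 * √(a * b) := by
    rw [add_sq, Real.sq_sqrt ha, Real.sq_sqrt hb, Real.sqrt_mul ha]
    ring
  rw [← hsq, Real.sqrt_sq (by positivity)]
  simp only [Multiset.insert_eq_cons, Multiset.cons_add, Multiset.singleton_add,
    Multiset.map_cons, abs_of_nonneg (Real.sqrt_nonneg _), abs_neg, Multiset.map_replicate,
    abs_zero, Multiset.sum_cons, Multiset.sum_replicate, nsmul_zero, add_zero]
  ring

section Tree

variable {n : ℕ}

instance (n d a : ℕ) : DecidableRel (Tnd n d a).Adj := fun _ _ =>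
  decidable_of_iff' _ (fromRel_adj _ _ _)

theorem tnd_four_zero_adj {u v : Fin n} : (Tnd n 4 0).Adj u v ↔
    (u.val + 1 = v.val ∧ v.val ≤ 4) ∨ (v.val + 1 = u.val ∧ u.val ≤ 4) ∨
      (u.val = 3 ∧ 4 < v.val) ∨ (v.val = 3 ∧ 4 < u.val) := by
  simp only [Tnd, fromRel_adj, ne_eq, Fin.ext_iff]
  omega

/-- A common non-neighbour of an edge is `v₀` if the edge meets `v₃`, and `v₄` otherwise. -/
theorem tnd_four_zero_compl_commonNeighbors_nonempty (hn : 5 ≤ n) (u v : Fin n)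
    (h : (Tnd n 4 0).Adj u v) : ((Tnd n 4 0)ᶜ.commonNeighbors u v).Nonempty := by
  rw [tnd_four_zero_adj] at h
  by_cases h3 : u.val = 3 ∨ v.val = 3
  · refine ⟨⟨0, by omega⟩, ?_⟩
    simp only [mem_commonNeighbors, compl_adj, tnd_four_zero_adj, ne_eq, Fin.ext_iff]
    omega
  · refine ⟨⟨4, by omega⟩, ?_⟩
    simp only [mem_commonNeighbors, compl_adj, tnd_four_zero_adj, ne_eq, Fin.ext_iff]
    omega

theorem tnd_four_zero_exists_adj (hn : 5 ≤ n) (v : Fin n) : ∃ u, (Tnd n 4 0).Adj v u := by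
  obtain h0 | hpath | hpendant : v.val = 0 ∨ (0 < v.val ∧ v.val ≤ 4) ∨ 4 < v.val := by omega
  · exact ⟨⟨1, by omega⟩, by simp only [tnd_four_zero_adj]; omega⟩
  · exact ⟨⟨v.val - 1, by omega⟩, by simp only [tnd_four_zero_adj]; omega⟩
  · exact ⟨⟨3, by omega⟩, by simp [tnd_four_zero_adj, hpendant]⟩

theorem eccMatrix_compl_tnd_four_zero (hn : 5 ≤ n) :
    eccMatrix (Tnd n 4 0)ᶜ = (2 : ℝ) • (Tnd n 4 0).adjMatrix ℝ :=
  eccMatrix_compl_eq_two_smul_adjMatrix (tnd_four_zero_compl_commonNeighbors_nonempty hn)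
    (tnd_four_zero_exists_adj hn)

theorem submatrix_scalar_sub_two_smul_adjMatrix_tnd_four_zero (k : ℕ) (t : ℝ) :
    (scalar (Fin (4 + k)) t - (2 : ℝ) • (Tnd (4 + k) 4 0).adjMatrix ℝ).submatrix
        finSumFinEquiv finSumFinEquiv =
      fromBlocks !![t, -2, 0, 0; -2, t, -2, 0; 0, -2, t, -2; 0, 0, -2, t]
        (of fun i _ => if i = 3 then -2 else 0) (of fun _ j => if j = 3 then -2 else 0)
        (t • 1) := by
  ext (i | i) (j | j)
  · fin_cases i <;> fin_cases j <;> simp [tnd_four_zero_adj, Fin.ext_iff]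
  all_goals
    simp only [submatrix_apply, Matrix.sub_apply, Matrix.smul_apply, smul_eq_mul, scalar_apply,
      diagonal_apply, adjMatrix_apply, tnd_four_zero_adj, finSumFinEquiv_apply_left,
      finSumFinEquiv_apply_right, Fin.ext_iff, Fin.val_castAdd, Fin.val_natAdd,
      fromBlocks_apply₁₂, fromBlocks_apply₂₁, fromBlocks_apply₂₂, of_apply, one_apply]
    split_ifs <;> first | omega | norm_num

theorem det_scalar_sub_two_smul_adjMatrix_tnd_four_zero (k : ℕ) {t : ℝ} (ht : t ≠ 0) :
    (scalar (Fin (4 + k)) t - (2 : ℝ) • (Tnd (4 + k) 4 0).adjMatrix ℝ).det =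
      t ^ k * (t ^ 4 - (4 * k + 12) * t ^ 2 + (32 * k + 16)) := by
  rw [← det_submatrix_equiv_self finSumFinEquiv,
    submatrix_scalar_sub_two_smul_adjMatrix_tnd_four_zero, det_fromBlocks_smul_one₂₂ _ _ _ ht,
    Fintype.card_fin]
  have hschur : !![t, -2, 0, 0; -2, t, -2, 0; 0, -2, t, -2; 0, 0, -2, t] -
      t⁻¹ • ((of fun i (_ : Fin k) => if i = 3 then (-2 : ℝ) else 0) *
        of fun (_ : Fin k) j => if j = 3 then (-2 : ℝ) else 0) =
      !![t, -2, 0, 0; -2, t, -2, 0; 0, -2, t, -2; 0, 0, -2, t - 4 * k / t] := by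
    ext i j
    fin_cases i <;> fin_cases j <;> simp [mul_apply]
    ring
  rw [hschur]
  congr 1
  simp [det_succ_row_zero, Fin.sum_univ_succ, Fin.succAbove, Fin.castSucc, Fin.castAdd,
    Fin.castLE]
  field_simp
  ring

theorem charpoly_two_smul_adjMatrix_tnd_four_zero (hn : 4 ≤ n) :
    ((2 : ℝ) • (Tnd n 4 0).adjMatrix ℝ).charpoly =
      X ^ (n - 4) * (X ^ 4 - C (4 * (n : ℝ) - 4) * X ^ 2 + C (32 * (n : ℝ) - 112)) := by
  obtain ⟨k, rfl⟩ := Nat.exists_eq_add_of_le hn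
  refine eq_of_infinite_eval_eq _ _
    ((Set.finite_singleton 0).infinite_compl.mono fun t (ht : t ≠ 0) => ?_)
  simp only [Set.mem_ofPred_eq, eval_charpoly,
    det_scalar_sub_two_smul_adjMatrix_tnd_four_zero k ht, eval_mul, eval_pow, eval_X, eval_add,
    eval_sub, eval_C, Nat.add_sub_cancel_left]
  push_cast
  ring

theorem charpoly_eccMatrix_compl_tnd_four_zero (hn : 5 ≤ n) {s : ℝ}
    (hs : s ^ 2 = (n : ℝ) ^ 2 - 10 * n + 29) :
    (eccMatrix (Tnd n 4 0)ᶜ).charpoly =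
      X ^ (n - 4) * ((X ^ 2 - C (2 * n - 2 + 2 * s)) * (X ^ 2 - C (2 * n - 2 - 2 * s))) := by
  have hsum : 4 * (n : ℝ) - 4 = (2 * n - 2 + 2 * s) + (2 * n - 2 - 2 * s) := by ring
  have hprod : 32 * (n : ℝ) - 112 = (2 * n - 2 + 2 * s) * (2 * n - 2 - 2 * s) := by
    linear_combination 4 * hs
  rw [eccMatrix_compl_tnd_four_zero hn, charpoly_two_smul_adjMatrix_tnd_four_zero (by omega),
    hsum, hprod, X_pow_four_sub_C_add_mul_X_sq_add_C_mul]

end Tree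

/-- Lemma 5.4: the `𝓔`-energy and `𝓔`-spectrum of `(T_{n,4}^{0,n-5})ᶜ`. -/
theorem stmt_16 {n : ℕ} (hn : 5 ≤ n) :
    eccEnergy ((Tnd n 4 0)ᶜ) =
      2 * Real.sqrt (4 * ((n : ℝ) - 1) + 8 * Real.sqrt (2 * (n : ℝ) - 7)) ∧
    eccEigs ((Tnd n 4 0)ᶜ) =
      ({Real.sqrt (2 * (n : ℝ) - 2 +
            2 * Real.sqrt ((n : ℝ) ^ 2 - 10 * (n : ℝ) + 29)),
        -Real.sqrt (2 * (n : ℝ) - 2 +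
            2 * Real.sqrt ((n : ℝ) ^ 2 - 10 * (n : ℝ) + 29)),
        Real.sqrt (2 * (n : ℝ) - 2 -
            2 * Real.sqrt ((n : ℝ) ^ 2 - 10 * (n : ℝ) + 29)),
        -Real.sqrt (2 * (n : ℝ) - 2 -
            2 * Real.sqrt ((n : ℝ) ^ 2 - 10 * (n : ℝ) + 29))} : Multiset ℝ) +
      Multiset.replicate (n - 4) 0 := by
  have hn' : (5 : ℝ) ≤ n := by exact_mod_cast hn
  set s := √((n : ℝ) ^ 2 - 10 * n + 29)
  have hs : s ^ 2 = (n : ℝ) ^ 2 - 10 * n + 29 := Real.sq_sqrt (by nlinarith)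
  have hs_le : s ≤ n - 1 := Real.sqrt_le_iff.mpr ⟨by linarith, by nlinarith⟩
  have ha : 0 ≤ 2 * (n : ℝ) - 2 + 2 * s := by
    linarith [Real.sqrt_nonneg ((n : ℝ) ^ 2 - 10 * n + 29)]
  have hb : 0 ≤ 2 * (n : ℝ) - 2 - 2 * s := by linarith
  have heigs : eccEigs (Tnd n 4 0)ᶜ =
      ({√(2 * n - 2 + 2 * s), -√(2 * n - 2 + 2 * s), √(2 * n - 2 - 2 * s),
        -√(2 * n - 2 - 2 * s)} : Multiset ℝ) + Multiset.replicate (n - 4) 0 := by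
    rw [eccEigs, charpoly_eccMatrix_compl_tnd_four_zero hn hs,
      roots_X_pow_mul_X_sq_sub_C_mul_X_sq_sub_C ha hb]
  refine ⟨?_, heigs⟩
  have hab : (2 * (n : ℝ) - 2 + 2 * s) * (2 * n - 2 - 2 * s) = 4 ^ 2 * (2 * n - 7) := by
    linear_combination (-4 : ℝ) * hs
  rw [eccEnergy, heigs, sum_map_abs_sqrt_neg_sqrt_add_replicate_zero ha hb, hab,
    Real.sqrt_mul (by positivity), Real.sqrt_sq (by positivity)]
  congr 2
  ring
end
end
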